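/- If a normed-space Friedrich inequality ‖v‖_{L²(Ω)} ≤ c_F(‖∇v‖_{L²(Ω)} + |⟨v⟩_{Γ_I}|) holds for all v ∈ H¹(Ω), then the functional v ↦ ½‖∇v‖² + (1/(2m))‖v‖²_{L¹(Γ_I)} is coercive on H¹(Ω): there exists C > 0 (explicitly C = (1/(4c_F²))·min{1, |Γ_I|/m}) such that ½‖∇v‖² + (1/(2m))‖v‖²_{L¹(Γ_I)} ≥ C‖v‖²_{L²(Ω)} for all v ∈ H¹(Ω). -/
import Mathlib


/-- Coercivity from a Friedrich inequality: if `‖v‖_{L²} ≤ c_F(‖∇v‖ + |⟨v⟩_{Γ_I}|)` for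
all `v ∈ H¹(Ω)` (here abstracted via the norm functionals `L2, grad, L1, avg`), and
Jensen's inequality `|Γ_I|·⟨v⟩² ≤ ‖v‖²_{L¹(Γ_I)}` holds, then
`½‖∇v‖² + (1/(2m))‖v‖²_{L¹(Γ_I)} ≥ C‖v‖²_{L²}` with the explicit constant
`C = (1/(4c_F²))·min{1, |Γ_I|/m} > 0`. -/
theorem stmt_3 {V : Type*} (L2 grad L1 avg : V → ℝ) (cF m ΓI : ℝ)
    (hcF : 0 < cF) (hm : 0 < m) (hΓ : 0 < ΓI)
    (hL2 : ∀ v, 0 ≤ L2 v) (hgrad : ∀ v, 0 ≤ grad v) (hL1 : ∀ v, 0 ≤ L1 v)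
    (hFriedrich : ∀ v, L2 v ≤ cF * (grad v + |avg v|))
    (hJensen : ∀ v, ΓI * (avg v) ^ 2 ≤ (L1 v) ^ 2) :
    ∃ C : ℝ, 0 < C ∧ C = (1 / (4 * cF ^ 2)) * min 1 (ΓI / m) ∧
      ∀ v, (1 / 2) * (grad v) ^ 2 + (1 / (2 * m)) * (L1 v) ^ 2 ≥ C * (L2 v) ^ 2 := by
  set C := (1 / (4 * cF ^ 2)) * min 1 (ΓI / m) with hC
  have hmin : 0 < min 1 (ΓI / m) := lt_min one_pos (div_pos hΓ hm)
  refine ⟨C, mul_pos (by positivity) hmin, rfl, fun v => ?_⟩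
  have h1 := hFriedrich v
  have h2 := hJensen v
  have hsq : (L2 v) ^ 2 ≤ 2 * cF ^ 2 * ((grad v) ^ 2 + (avg v) ^ 2) := by
    have h3 : (L2 v) ^ 2 ≤ (cF * (grad v + |avg v|)) ^ 2 := by
      apply pow_le_pow_left₀ (hL2 v) h1
    have : (cF * (grad v + |avg v|)) ^ 2 ≤ 2 * cF ^ 2 * ((grad v) ^ 2 + (avg v) ^ 2) := by
      have := sq_abs (avg v)
      nlinarith [sq_nonneg (grad v - |avg v|), sq_nonneg cF]
    linarith
  have hmin1 : min 1 (ΓI / m) ≤ 1 := min_le_left _ _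
  have hmin2 : min 1 (ΓI / m) ≤ ΓI / m := min_le_right _ _
  -- C * L2² ≤ (1/2) min (g² + a²) ≤ (1/2) g² + (1/2)(Γ/m) a² ≤ (1/2) g² + (1/(2m)) L1²
  have key : C * (L2 v) ^ 2 ≤ (1/2) * min 1 (ΓI / m) * ((grad v) ^ 2 + (avg v) ^ 2) := by
    rw [hC]
    have := mul_le_mul_of_nonneg_left hsq (le_of_lt (mul_pos (show (0:ℝ) < 1 / (4 * cF ^ 2) by positivity) hmin))
    calc (1 / (4 * cF ^ 2)) * min 1 (ΓI / m) * (L2 v) ^ 2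
        ≤ (1 / (4 * cF ^ 2)) * min 1 (ΓI / m) * (2 * cF ^ 2 * ((grad v) ^ 2 + (avg v) ^ 2)) := this
      _ = (1/2) * min 1 (ΓI / m) * ((grad v) ^ 2 + (avg v) ^ 2) := by field_simp; ring
  have h4 : (1/2) * min 1 (ΓI / m) * ((grad v) ^ 2 + (avg v) ^ 2)
      ≤ (1/2) * (grad v) ^ 2 + (1/(2*m)) * (L1 v) ^ 2 := by
    have ha : (1/2) * min 1 (ΓI / m) * (grad v) ^ 2 ≤ (1/2) * (grad v) ^ 2 := by
      nlinarith [sq_nonneg (grad v)]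
    have hb : (1/2) * min 1 (ΓI / m) * (avg v) ^ 2 ≤ (1/(2*m)) * (L1 v) ^ 2 := by
      have : min 1 (ΓI / m) * (avg v) ^ 2 ≤ (ΓI / m) * (avg v) ^ 2 := by
        nlinarith [sq_nonneg (avg v)]
      have h5 : (ΓI / m) * (avg v) ^ 2 ≤ (1/m) * (L1 v) ^ 2 := by
        rw [div_mul_eq_mul_div, one_div, inv_mul_eq_div]
        gcongr
      have h6 : min 1 (ΓI / m) * (avg v) ^ 2 ≤ (1/m) * (L1 v) ^ 2 := le_trans this h5
      calc (1/2) * min 1 (ΓI / m) * (avg v) ^ 2 = (1/2) * (min 1 (ΓI / m) * (avg v) ^ 2) := by ring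
        _ ≤ (1/2) * ((1/m) * (L1 v) ^ 2) := by linarith
        _ = (1/(2*m)) * (L1 v) ^ 2 := by ring
    nlinarith [ha, hb]
  linarith
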